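/- Let X, U be finite, P a transition kernel Lipschitz in (μ,ν) with constant L_P, and let π_t be policies satisfying |π_t(x, μ₁) − π_t(x, μ₂)|₁ ≤ L_Q |μ₁ − μ₂|₁ for all x, μ₁, μ₂. Let μ_t^N be the empirical state distribution of the N-agent process driven by the policy sequence {π_t} from initial distribution μ₀, and let μ_t^∞ be the deterministic mean-field flow defined by μ_{t+1}^∞ = P^MF(μ_t^∞, π_t) with μ_0^∞ = μ₀. Then for all t ≥ 0, E|μ_t^N − μ_t^∞|₁ ≤ (C_P/√N)(√(|X|) + √(|U|)) · (S_P^t − 1)/(S_P − 1), where C_P = 2 + L_P and S_P = (1 + 2L_P) + L_Q(1 + L_P). -/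

import Mathlib

open Finset

def IsPmf {X : Type*} [Fintype X] (μ : X → ℝ) : Prop :=
  (∀ x, 0 ≤ μ x) ∧ ∑ x, μ x = 1

noncomputable def l1 {X : Type*} [Fintype X] (f : X → ℝ) : ℝ := ∑ x, |f x|

/-- Empirical distribution of a configuration of `N` agents. -/
noncomputable def emp {X : Type*} [Fintype X] [DecidableEq X] {N : ℕ}
    (s : Fin N → X) : X → ℝ :=
  fun x => (∑ i, if s i = x then (1 : ℝ) else 0) / N

/-- The mean-field action distribution `ν^MF(μ, π)`. -/
noncomputable def nuMF {X U : Type*} [Fintype X] [Fintype U]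
    (μ : X → ℝ) (π : X → (X → ℝ) → U → ℝ) : U → ℝ :=
  fun u => ∑ x, π x μ u * μ x

/-- The one-step mean-field state distribution update `P^MF(μ, π)`. -/
noncomputable def PMF' {X U : Type*} [Fintype X] [Fintype U]
    (P : X → U → (X → ℝ) → (U → ℝ) → X → ℝ)
    (μ : X → ℝ) (π : X → (X → ℝ) → U → ℝ) : X → ℝ :=
  fun y => ∑ x, ∑ u, P x u μ (nuMF μ π) y * π x μ u * μ x

/-- Law of the `N`-agent joint-state process at time `t`, started from the deterministic
joint state `x₀`: at each step agents sample actions independently via `π t` and transition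
independently via `P`. -/
noncomputable def Wproc {X U : Type*} [Fintype X] [Fintype U] [DecidableEq X] [DecidableEq U]
    {N : ℕ} (P : X → U → (X → ℝ) → (U → ℝ) → X → ℝ)
    (π : ℕ → X → (X → ℝ) → U → ℝ) (x₀ : Fin N → X) : ℕ → (Fin N → X) → ℝ
  | 0 => fun s => if s = x₀ then 1 else 0
  | t + 1 => fun s' => ∑ s : Fin N → X, Wproc P π x₀ t s *
      ∑ a : Fin N → U, (∏ i, π t (s i) (emp s) (a i)) *
        ∏ i, P (s i) (a i) (emp s) (emp a) (s' i)

/-- Deterministic mean-field flow of state distributions. -/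
noncomputable def muFlow {X U : Type*} [Fintype X] [Fintype U]
    (P : X → U → (X → ℝ) → (U → ℝ) → X → ℝ)
    (π : ℕ → X → (X → ℝ) → U → ℝ) (μ₀ : X → ℝ) : ℕ → X → ℝ
  | 0 => μ₀
  | t + 1 => PMF' P (muFlow P π μ₀ t) (π t)

/-! Write `E t` for the expected distance. Given the configuration `s` at time `t`, the
triangle inequality splits the distance at time `t + 1` into four terms: the sampling noise of
the next states around the average of the agents' transition kernels; the effect on those
kernels of replacing the empirical action distribution by `ν^MF(emp s)`, at most `L_P` times
the sampling noise of the actions; the sampling noise of the resulting averaged kernel around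
`P^MF(emp s)`; and `|P^MF(emp s) − P^MF(μ_t)|`, at most `S_P |emp s − μ_t|` because `P^MF` is
`S_P`-Lipschitz. An average of `N` independent probability vectors on `Y` deviates from its
mean by at most `√|Y| / √N` in expected L1 norm, so
`E (t + 1) ≤ S_P E t + (2 √|X| + L_P √|U|) / √N` with `E 0 = 0`. -/

theorem IsPmf.le_one {α : Type*} [Fintype α] {p : α → ℝ} (hp : IsPmf p) (a : α) : p a ≤ 1 :=
  hp.2 ▸ Finset.single_le_sum (fun b _ => hp.1 b) (Finset.mem_univ a)

theorem l1_sub_le_add {α : Type*} [Fintype α] (f g h : α → ℝ) :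
    l1 (fun a => f a - h a) ≤ l1 (fun a => f a - g a) + l1 (fun a => g a - h a) := by
  rw [l1, l1, l1, ← Finset.sum_add_distrib]
  exact Finset.sum_le_sum fun a _ => abs_sub_le _ _ _

section FiniteExpectation

variable {α β : Type*} [Fintype α] [Fintype β]

theorem IsPmf.sum_mul_l1_sub_le {w : α → ℝ} (hw : IsPmf w) (f : α → β → ℝ) (g h : β → ℝ) :
    ∑ a, w a * l1 (fun b => f a b - g b)
      ≤ ∑ a, w a * l1 (fun b => f a b - h b) + l1 (fun b => h b - g b) := by
  calc ∑ a, w a * l1 (fun b => f a b - g b)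
      ≤ ∑ a, w a * (l1 (fun b => f a b - h b) + l1 (fun b => h b - g b)) :=
        Finset.sum_le_sum fun a _ => mul_le_mul_of_nonneg_left (l1_sub_le_add _ _ _) (hw.1 a)
    _ = _ := by simp only [mul_add, Finset.sum_add_distrib, ← Finset.sum_mul, hw.2, one_mul]

theorem sum_sum_mul_mul_eq (w : α → ℝ) (K : α → β → ℝ) (F : β → ℝ) :
    ∑ b, (∑ a, w a * K a b) * F b = ∑ a, w a * ∑ b, K a b * F b := by
  simp_rw [Finset.sum_mul, mul_assoc]
  rw [Finset.sum_comm]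
  simp_rw [← Finset.mul_sum]

theorem sum_mul_abs_le_sqrt_sum_mul_sq {w : α → ℝ} (hw : IsPmf w) (z : α → ℝ) :
    ∑ a, w a * |z a| ≤ √(∑ a, w a * z a ^ 2) := by
  have h := Real.sum_sqrt_mul_sqrt_le Finset.univ hw.1
    fun a => mul_nonneg (hw.1 a) (sq_nonneg (z a))
  rw [hw.2, Real.sqrt_one, one_mul] at h
  convert h using 2 with a
  rw [Real.sqrt_mul (hw.1 a), Real.sqrt_sq_eq_abs, ← mul_assoc, Real.mul_self_sqrt (hw.1 a)]

theorem IsPmf.sum_mul_sub_sq_le {w : α → ℝ} (hw : IsPmf w) {f : α → ℝ} (hf₀ : ∀ a, 0 ≤ f a)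
    (hf₁ : ∀ a, f a ≤ 1) :
    ∑ a, w a * (f a - ∑ b, w b * f b) ^ 2 ≤ ∑ a, w a * f a := by
  set m := ∑ b, w b * f b
  have expand : ∑ a, w a * (f a - m) ^ 2 = ∑ a, w a * f a ^ 2 - m ^ 2 := by
    have h : ∀ a, w a * (f a - m) ^ 2 = w a * f a ^ 2 - 2 * m * (w a * f a) + m ^ 2 * w a :=
      fun a => by ring
    simp only [h, Finset.sum_add_distrib, Finset.sum_sub_distrib, ← Finset.mul_sum, hw.2]
    ring
  have hsq : ∑ a, w a * f a ^ 2 ≤ m :=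
    Finset.sum_le_sum fun a _ => mul_le_mul_of_nonneg_left
      (pow_le_of_le_one (hf₀ a) (hf₁ a) two_ne_zero) (hw.1 a)
  nlinarith [sq_nonneg m]

theorem sum_sqrt_le_sqrt_card_mul_sqrt_sum {f : α → ℝ} (hf : ∀ a, 0 ≤ f a) :
    ∑ a, √(f a) ≤ √(Fintype.card α) * √(∑ a, f a) := by
  simpa using Real.sum_sqrt_mul_sqrt_le Finset.univ (fun _ => zero_le_one) hf

end FiniteExpectation

section ProductLaw

variable {A : Type*} [Fintype A] {N : ℕ}

-- `∑ a, (∏ i, p i (a i)) * F a` is the expectation of `F` under the product of the laws `p i`.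

theorem isPmf_prod {p : Fin N → A → ℝ} (hp : ∀ i, IsPmf (p i)) :
    IsPmf fun a : Fin N → A => ∏ i, p i (a i) :=
  ⟨fun a => Finset.prod_nonneg fun i _ => (hp i).1 (a i),
    by rw [← Fintype.prod_sum]; exact Finset.prod_eq_one fun i _ => (hp i).2⟩

theorem sum_prod_mul_prod (p g : Fin N → A → ℝ) :
    ∑ a : Fin N → A, (∏ i, p i (a i)) * ∏ i, g i (a i) = ∏ i, ∑ b, p i b * g i b := by
  rw [Fintype.prod_sum]
  simp only [Finset.prod_mul_distrib]

theorem sum_prod_mul_apply {p : Fin N → A → ℝ} (hp : ∀ i, ∑ b, p i b = 1) (i : Fin N)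
    (φ : A → ℝ) : ∑ a : Fin N → A, (∏ k, p k (a k)) * φ (a i) = ∑ b, p i b * φ b := by
  have h := sum_prod_mul_prod p fun k b => if k = i then φ b else 1
  simp only [Fintype.prod_ite_eq'] at h
  rw [h, Finset.prod_eq_single i (fun k _ hk => by simp [hk, hp]) (by simp)]
  simp

theorem sum_prod_mul_mul_apply {p : Fin N → A → ℝ} (hp : ∀ i, ∑ b, p i b = 1) {i j : Fin N}
    (hij : i ≠ j) (φ ψ : A → ℝ) :
    ∑ a : Fin N → A, (∏ k, p k (a k)) * (φ (a i) * ψ (a j))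
      = (∑ b, p i b * φ b) * ∑ b, p j b * ψ b := by
  have h := sum_prod_mul_prod p fun k b => if k = i then φ b else if k = j then ψ b else 1
  have hprod : ∀ g : Fin N → ℝ, (∀ k, k ≠ i ∧ k ≠ j → g k = 1) → ∏ k, g k = g i * g j :=
    fun g hg => Finset.prod_eq_mul_of_mem i j (by simp) (by simp) hij fun k _ hk => hg k hk
  rw [hprod _ fun k hk => by simp [hk.1, hk.2, hp]] at h
  simp only [if_pos, if_neg hij.symm] at h
  rw [← h]
  congr! 2 with a
  rw [hprod (fun k => if k = i then φ (a k) else if k = j then ψ (a k) else 1)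
    fun k hk => by simp [hk.1, hk.2]]
  simp [hij.symm]

theorem sum_prod_mul_sum_sq {p : Fin N → A → ℝ} (hp : ∀ i, ∑ b, p i b = 1)
    {g : Fin N → A → ℝ} (hg : ∀ i, ∑ b, p i b * g i b = 0) :
    ∑ a : Fin N → A, (∏ k, p k (a k)) * (∑ i, g i (a i)) ^ 2 = ∑ i, ∑ b, p i b * g i b ^ 2 := by
  simp_rw [sq, Finset.sum_mul_sum, Finset.mul_sum]
  rw [Finset.sum_comm]
  refine Finset.sum_congr rfl fun i _ => ?_
  rw [Finset.sum_comm, Finset.sum_eq_single i]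
  · exact sum_prod_mul_apply hp i fun b => g i b * g i b
  · intro j _ hji
    rw [sum_prod_mul_mul_apply hp hji.symm, hg i, zero_mul]
  · simp

end ProductLaw

section Fluctuation

variable {A Y : Type*} [Fintype A] [Fintype Y] {N : ℕ}

/-- Each coordinate of the average of `N` independent probability vectors has variance at most
its mean over `N`; Cauchy–Schwarz over `Y` then turns the sum of standard deviations into
`√|Y| / √N`. -/
theorem sum_prod_mul_l1_avg_sub_le (hN : 0 < N) {p : Fin N → A → ℝ} (hp : ∀ i, IsPmf (p i))
    {f : Fin N → A → Y → ℝ} (hf : ∀ i b, IsPmf (f i b)) :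
    ∑ a : Fin N → A, (∏ i, p i (a i)) *
        l1 (fun y => (∑ i, f i (a i) y) / N - (∑ i, ∑ b, p i b * f i b y) / N)
      ≤ √(Fintype.card Y) / √N := by
  have hNpos : (0 : ℝ) < N := Nat.cast_pos.2 hN
  set m : Fin N → Y → ℝ := fun i y => ∑ b, p i b * f i b y
  have hm : ∀ i y, 0 ≤ m i y := fun i y =>
    Finset.sum_nonneg fun b _ => mul_nonneg ((hp i).1 b) ((hf i b).1 y)
  have hw := isPmf_prod hp
  have per_coord : ∀ y, ∑ a : Fin N → A, (∏ i, p i (a i)) *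
      |(∑ i, f i (a i) y) / N - (∑ i, m i y) / N| ≤ √(∑ i, m i y) / N := by
    intro y
    have hcentred : ∀ i, ∑ b, p i b * (f i b y - m i y) = 0 := fun i => by
      simp only [mul_sub, Finset.sum_sub_distrib, ← Finset.sum_mul, (hp i).2, one_mul, m,
        sub_self]
    have hvar : ∑ a : Fin N → A, (∏ i, p i (a i)) * (∑ i, (f i (a i) y - m i y)) ^ 2
        ≤ ∑ i, m i y := by
      rw [sum_prod_mul_sum_sq (fun i => (hp i).2) hcentred]
      exact Finset.sum_le_sum fun i _ =>
        (hp i).sum_mul_sub_sq_le (fun b => (hf i b).1 y) fun b => (hf i b).le_one y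
    calc ∑ a : Fin N → A, (∏ i, p i (a i)) * |(∑ i, f i (a i) y) / N - (∑ i, m i y) / N|
        = ∑ a : Fin N → A, (∏ i, p i (a i)) * |∑ i, (f i (a i) y - m i y)| / N :=
          Finset.sum_congr rfl fun a _ => by
            rw [div_sub_div_same, ← Finset.sum_sub_distrib, abs_div, abs_of_pos hNpos,
              mul_div_assoc]
      _ = (∑ a : Fin N → A, (∏ i, p i (a i)) * |∑ i, (f i (a i) y - m i y)|) / N :=
          (Finset.sum_div _ _ _).symm
      _ ≤ √(∑ a : Fin N → A, (∏ i, p i (a i)) * (∑ i, (f i (a i) y - m i y)) ^ 2) / N := by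
          gcongr
          exact sum_mul_abs_le_sqrt_sum_mul_sq hw _
      _ ≤ √(∑ i, m i y) / N := by gcongr
  have hrow : ∀ i, ∑ y, m i y = 1 := fun i => by
    simp only [m]
    rw [Finset.sum_comm]
    simp only [← Finset.mul_sum, (hf i _).2, mul_one, (hp i).2]
  have total : ∑ y, ∑ i, m i y = N := by
    rw [Finset.sum_comm]
    simp [hrow]
  calc ∑ a : Fin N → A, (∏ i, p i (a i)) *
        l1 (fun y => (∑ i, f i (a i) y) / N - (∑ i, m i y) / N)
      = ∑ y, ∑ a : Fin N → A, (∏ i, p i (a i)) *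
          |(∑ i, f i (a i) y) / N - (∑ i, m i y) / N| := by
        simp only [l1, Finset.mul_sum]
        exact Finset.sum_comm
    _ ≤ ∑ y, √(∑ i, m i y) / N := Finset.sum_le_sum fun y _ => per_coord y
    _ ≤ √(Fintype.card Y) * √(∑ y, ∑ i, m i y) / N := by
        rw [← Finset.sum_div]
        exact div_le_div_of_nonneg_right
          (sum_sqrt_le_sqrt_card_mul_sqrt_sum fun y => Finset.sum_nonneg fun i _ => hm i y)
          hNpos.le
    _ = √(Fintype.card Y) / √N := by
        rw [total, mul_div_assoc, Real.sqrt_div_self', mul_one_div]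

theorem sum_prod_mul_l1_emp_sub_le [DecidableEq A] (hN : 0 < N) {p : Fin N → A → ℝ}
    (hp : ∀ i, IsPmf (p i)) :
    ∑ a : Fin N → A, (∏ i, p i (a i)) * l1 (fun x => emp a x - (∑ i, p i x) / N)
      ≤ √(Fintype.card A) / √N := by
  have hδ : ∀ b : A, IsPmf fun x => if b = x then (1 : ℝ) else 0 :=
    fun b => ⟨fun x => by positivity, by simp⟩
  convert sum_prod_mul_l1_avg_sub_le hN hp fun _ => hδ using 6 with a x
  · rfl
  · simp

end Fluctuation

theorem isPmf_sum_mul {Z Y : Type*} [Fintype Z] [Fintype Y] {K : Z → Y → ℝ} {q : Z → ℝ}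
    (hK : ∀ z, IsPmf (K z)) (hq : IsPmf q) : IsPmf fun y => ∑ z, K z y * q z := by
  refine ⟨fun y => Finset.sum_nonneg fun z _ => mul_nonneg ((hK z).1 y) (hq.1 z), ?_⟩
  rw [Finset.sum_comm]
  simp only [← Finset.sum_mul, (hK _).2, one_mul, hq.2]

theorem l1_sum_mul_sub_sum_mul_le {Z Y : Type*} [Fintype Z] [Fintype Y] {K₁ K₂ : Z → Y → ℝ}
    {q₁ q₂ : Z → ℝ} (hK₂ : ∀ z, IsPmf (K₂ z)) (hq₁ : IsPmf q₁) {c : ℝ}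
    (hK : ∀ z, l1 (fun y => K₁ z y - K₂ z y) ≤ c) :
    l1 (fun y => ∑ z, K₁ z y * q₁ z - ∑ z, K₂ z y * q₂ z) ≤ c + l1 (fun z => q₁ z - q₂ z) := by
  have split : ∀ y, |∑ z, K₁ z y * q₁ z - ∑ z, K₂ z y * q₂ z|
      ≤ ∑ z, (|K₁ z y - K₂ z y| * q₁ z + K₂ z y * |q₁ z - q₂ z|) := fun y => by
    rw [← Finset.sum_sub_distrib]
    refine (Finset.abs_sum_le_sum_abs _ _).trans (Finset.sum_le_sum fun z _ => ?_)
    calc |K₁ z y * q₁ z - K₂ z y * q₂ z|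
        = |(K₁ z y - K₂ z y) * q₁ z + K₂ z y * (q₁ z - q₂ z)| := by ring_nf
      _ ≤ _ := by
        refine (abs_add_le _ _).trans_eq ?_
        rw [abs_mul, abs_mul, abs_of_nonneg (hq₁.1 z), abs_of_nonneg ((hK₂ z).1 y)]
  calc l1 (fun y => ∑ z, K₁ z y * q₁ z - ∑ z, K₂ z y * q₂ z)
      ≤ ∑ y, ∑ z, (|K₁ z y - K₂ z y| * q₁ z + K₂ z y * |q₁ z - q₂ z|) :=
        Finset.sum_le_sum fun y _ => split y
    _ = ∑ z, l1 (fun y => K₁ z y - K₂ z y) * q₁ z + l1 (fun z => q₁ z - q₂ z) := by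
        rw [Finset.sum_comm]
        simp only [Finset.sum_add_distrib, ← Finset.sum_mul, (hK₂ _).2, one_mul, l1]
    _ ≤ ∑ z, c * q₁ z + l1 (fun z => q₁ z - q₂ z) := by
        gcongr with z
        · exact hq₁.1 z
        · exact hK z
    _ = c + l1 (fun z => q₁ z - q₂ z) := by rw [← Finset.mul_sum, hq₁.2, mul_one]

section MeanField

variable {X U : Type*} [Fintype X] [Fintype U]

structure LipschitzTransition (L : ℝ) (P : X → U → (X → ℝ) → (U → ℝ) → X → ℝ) : Prop where
  isPmf : ∀ x u μ ν, IsPmf μ → IsPmf ν → IsPmf (P x u μ ν)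
  l1_sub_le : ∀ x u μ₁ μ₂ ν₁ ν₂, IsPmf μ₁ → IsPmf μ₂ → IsPmf ν₁ → IsPmf ν₂ →
    l1 (fun y => P x u μ₁ ν₁ y - P x u μ₂ ν₂ y)
      ≤ L * (l1 (fun x' => μ₁ x' - μ₂ x') + l1 (fun u' => ν₁ u' - ν₂ u'))

structure LipschitzPolicy (L : ℝ) (π : X → (X → ℝ) → U → ℝ) : Prop where
  isPmf : ∀ x μ, IsPmf μ → IsPmf (π x μ)
  l1_sub_le : ∀ x μ₁ μ₂, IsPmf μ₁ → IsPmf μ₂ →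
    l1 (fun u => π x μ₁ u - π x μ₂ u) ≤ L * l1 (fun x' => μ₁ x' - μ₂ x')

variable {L_P L_Q : ℝ} {P : X → U → (X → ℝ) → (U → ℝ) → X → ℝ} {π : X → (X → ℝ) → U → ℝ}
  {μ μ₁ μ₂ : X → ℝ}

theorem nuMF_isPmf (hπ : ∀ x, IsPmf (π x μ)) (hμ : IsPmf μ) : IsPmf (nuMF μ π) :=
  isPmf_sum_mul hπ hμ

theorem PMF'_isPmf (hP : ∀ x u, IsPmf (P x u μ (nuMF μ π))) (hπ : ∀ x, IsPmf (π x μ))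
    (hμ : IsPmf μ) : IsPmf (PMF' P μ π) := by
  have h := isPmf_sum_mul (fun x => isPmf_sum_mul (hP x) (hπ x)) hμ
  unfold PMF'
  simpa only [Finset.sum_mul] using h

theorem l1_nuMF_sub_le (hπ : LipschitzPolicy L_Q π) (hμ₁ : IsPmf μ₁) (hμ₂ : IsPmf μ₂) :
    l1 (fun u => nuMF μ₁ π u - nuMF μ₂ π u) ≤ (1 + L_Q) * l1 (fun x => μ₁ x - μ₂ x) := by
  have h := l1_sum_mul_sub_sum_mul_le (q₂ := μ₂) (fun x => hπ.isPmf x μ₂ hμ₂) hμ₁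
    fun x => hπ.l1_sub_le x μ₁ μ₂ hμ₁ hμ₂
  simp only [nuMF]
  linarith

theorem l1_PMF'_sub_le (hL_P : 0 ≤ L_P) (hP : LipschitzTransition L_P P)
    (hπ : LipschitzPolicy L_Q π) (hμ₁ : IsPmf μ₁) (hμ₂ : IsPmf μ₂) :
    l1 (fun y => PMF' P μ₁ π y - PMF' P μ₂ π y)
      ≤ ((1 + 2 * L_P) + L_Q * (1 + L_P)) * l1 (fun x => μ₁ x - μ₂ x) := by
  set D := l1 (fun x => μ₁ x - μ₂ x)
  have hν := l1_nuMF_sub_le hπ hμ₁ hμ₂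
  have hν₂ := nuMF_isPmf (fun x => hπ.isPmf x μ₂ hμ₂) hμ₂
  have hstate : ∀ x, l1 (fun y => ∑ u, P x u μ₁ (nuMF μ₁ π) y * π x μ₁ u
      - ∑ u, P x u μ₂ (nuMF μ₂ π) y * π x μ₂ u)
      ≤ L_P * (D + l1 (fun u => nuMF μ₁ π u - nuMF μ₂ π u)) + L_Q * D := fun x =>
    (l1_sum_mul_sub_sum_mul_le (q₂ := π x μ₂) (fun u => hP.isPmf x u μ₂ _ hμ₂ hν₂)
      (hπ.isPmf x μ₁ hμ₁) fun u => hP.l1_sub_le x u _ _ _ _ hμ₁ hμ₂ (nuMF_isPmf (fun x => hπ.isPmf x μ₁ hμ₁) hμ₁)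
        hν₂).trans (add_le_add_right (hπ.l1_sub_le x μ₁ μ₂ hμ₁ hμ₂) _)
  have h := l1_sum_mul_sub_sum_mul_le (q₂ := μ₂)
    (fun x => isPmf_sum_mul (fun u => hP.isPmf x u μ₂ _ hμ₂ hν₂) (hπ.isPmf x μ₂ hμ₂)) hμ₁ hstate
  simp only [Finset.sum_mul] at h
  unfold PMF'
  nlinarith [mul_le_mul_of_nonneg_left hν hL_P]

theorem muFlow_isPmf (hP : ∀ x u μ ν, IsPmf μ → IsPmf ν → IsPmf (P x u μ ν))
    {π : ℕ → X → (X → ℝ) → U → ℝ} (hπ : ∀ t x μ, IsPmf μ → IsPmf (π t x μ)) {μ₀ : X → ℝ}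
    (hμ₀ : IsPmf μ₀) (t : ℕ) : IsPmf (muFlow P π μ₀ t) := by
  induction t with
  | zero => exact hμ₀
  | succ t ih =>
    have hπt : ∀ x, IsPmf (π t x (muFlow P π μ₀ t)) := fun x => hπ t x _ ih
    exact PMF'_isPmf (fun x u => hP x u _ _ ih (nuMF_isPmf hπt ih)) hπt ih

end MeanField

section Empirical

variable {X : Type*} [Fintype X] [DecidableEq X] {N : ℕ}

theorem emp_isPmf (hN : 0 < N) (s : Fin N → X) : IsPmf (emp s) := by
  refine ⟨fun x => by unfold emp; positivity, ?_⟩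
  simp only [emp, ← Finset.sum_div]
  rw [Finset.sum_comm]
  simp [(Nat.cast_pos.2 hN).ne']

theorem sum_mul_emp (s : Fin N → X) (g : X → ℝ) : ∑ x, g x * emp s x = (∑ i, g (s i)) / N := by
  simp only [emp, mul_div_assoc', ← Finset.sum_div, Finset.mul_sum, mul_ite, mul_one, mul_zero]
  rw [Finset.sum_comm]
  simp

theorem l1_avg_sub_avg_le {Y : Type*} [Fintype Y] (hN : 0 < N) {f g : Fin N → Y → ℝ} {c : ℝ}
    (h : ∀ i, l1 (fun y => f i y - g i y) ≤ c) :
    l1 (fun y => (∑ i, f i y) / N - (∑ i, g i y) / N) ≤ c := by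
  have hNpos : (0 : ℝ) < N := Nat.cast_pos.2 hN
  calc l1 (fun y => (∑ i, f i y) / N - (∑ i, g i y) / N)
      ≤ ∑ y, (∑ i, |f i y - g i y|) / N := Finset.sum_le_sum fun y _ => by
        dsimp only
        rw [div_sub_div_same, ← Finset.sum_sub_distrib, abs_div, abs_of_pos hNpos]
        exact div_le_div_of_nonneg_right (Finset.abs_sum_le_sum_abs _ _) hNpos.le
    _ = (∑ i, l1 (fun y => f i y - g i y)) / N := by
        rw [← Finset.sum_div, Finset.sum_comm]
        rfl
    _ ≤ (∑ _i : Fin N, c) / N := by gcongr with i; exact h i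
    _ = c := by simp [hNpos.ne']

end Empirical

section NAgent

variable {X U : Type*} [Fintype X] [Fintype U] [DecidableEq X] {N : ℕ}
  {L_P L_Q : ℝ} {P : X → U → (X → ℝ) → (U → ℝ) → X → ℝ} {π : X → (X → ℝ) → U → ℝ}

theorem sum_prod_mul_l1_avg_transition_sub_PMF'_le (hN : 0 < N)
    (hP : ∀ x u μ ν, IsPmf μ → IsPmf ν → IsPmf (P x u μ ν))
    (hπ : ∀ x μ, IsPmf μ → IsPmf (π x μ)) (s : Fin N → X) :
    ∑ a : Fin N → U, (∏ i, π (s i) (emp s) (a i)) *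
        l1 (fun y => (∑ i, P (s i) (a i) (emp s) (nuMF (emp s) π) y) / N - PMF' P (emp s) π y)
      ≤ √(Fintype.card X) / √N := by
  have hs := emp_isPmf hN s
  have hν := nuMF_isPmf (fun x => hπ x _ hs) hs
  convert sum_prod_mul_l1_avg_sub_le hN (fun i => hπ (s i) _ hs)
    (f := fun i u => P (s i) u (emp s) (nuMF (emp s) π)) (fun i u => hP _ _ _ _ hs hν)
    using 6 with a _ y
  simp only [PMF', ← Finset.sum_mul]
  rw [sum_mul_emp s fun x => ∑ u, P x u (emp s) (nuMF (emp s) π) y * π x (emp s) u]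
  simp only [mul_comm]

variable [DecidableEq U]

theorem sum_prod_mul_l1_emp_sub_nuMF_le (hN : 0 < N) (hπ : ∀ x μ, IsPmf μ → IsPmf (π x μ))
    (s : Fin N → X) :
    ∑ a : Fin N → U, (∏ i, π (s i) (emp s) (a i)) * l1 (fun u => emp a u - nuMF (emp s) π u)
      ≤ √(Fintype.card U) / √N := by
  convert sum_prod_mul_l1_emp_sub_le hN fun i => hπ (s i) _ (emp_isPmf hN s) using 6 with a _ u
  exact sum_mul_emp s fun x => π x (emp s) u

theorem l1_avg_transition_sub_PMF'_le (hN : 0 < N) (hL_P : 0 ≤ L_P)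
    (hP : LipschitzTransition L_P P) (hπ : LipschitzPolicy L_Q π) {μ : X → ℝ} (hμ : IsPmf μ)
    (s : Fin N → X) (a : Fin N → U) :
    l1 (fun y => (∑ i, P (s i) (a i) (emp s) (emp a) y) / N - PMF' P μ π y)
      ≤ L_P * l1 (fun u => emp a u - nuMF (emp s) π u)
        + l1 (fun y => (∑ i, P (s i) (a i) (emp s) (nuMF (emp s) π) y) / N - PMF' P (emp s) π y)
        + ((1 + 2 * L_P) + L_Q * (1 + L_P)) * l1 (fun x => emp s x - μ x) := by
  have hs := emp_isPmf hN s
  have action_swap : l1 (fun y => (∑ i, P (s i) (a i) (emp s) (emp a) y) / N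
      - (∑ i, P (s i) (a i) (emp s) (nuMF (emp s) π) y) / N)
      ≤ L_P * l1 (fun u => emp a u - nuMF (emp s) π u) :=
    l1_avg_sub_avg_le hN fun i => by
      simpa [l1] using hP.l1_sub_le (s i) (a i) _ _ _ _ hs hs (emp_isPmf hN a)
        (nuMF_isPmf (fun x => hπ.isPmf x _ hs) hs)
  have flow_step := l1_PMF'_sub_le hL_P hP hπ hs hμ
  have tri₁ := l1_sub_le_add (fun y => (∑ i, P (s i) (a i) (emp s) (emp a) y) / N)
    (fun y => (∑ i, P (s i) (a i) (emp s) (nuMF (emp s) π) y) / N) (PMF' P μ π)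
  have tri₂ := l1_sub_le_add (fun y => (∑ i, P (s i) (a i) (emp s) (nuMF (emp s) π) y) / N)
    (PMF' P (emp s) π) (PMF' P μ π)
  linarith

theorem sum_prod_mul_sum_prod_mul_l1_emp_sub_PMF'_le (hN : 0 < N) (hL_P : 0 ≤ L_P)
    (hP : LipschitzTransition L_P P) (hπ : LipschitzPolicy L_Q π) {μ : X → ℝ} (hμ : IsPmf μ)
    (s : Fin N → X) :
    ∑ a : Fin N → U, (∏ i, π (s i) (emp s) (a i)) *
        ∑ s' : Fin N → X, (∏ i, P (s i) (a i) (emp s) (emp a) (s' i)) *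
          l1 (fun y => emp s' y - PMF' P μ π y)
      ≤ (2 * √(Fintype.card X) + L_P * √(Fintype.card U)) / √N
        + ((1 + 2 * L_P) + L_Q * (1 + L_P)) * l1 (fun x => emp s x - μ x) := by
  set S := (1 + 2 * L_P) + L_Q * (1 + L_P)
  set ν := nuMF (emp s) π
  have hs := emp_isPmf hN s
  have hπs : ∀ x, IsPmf (π x (emp s)) := fun x => hπ.isPmf x _ hs
  have hw := isPmf_prod fun i => hπs (s i)
  have state_noise : ∀ a : Fin N → U,
      ∑ s' : Fin N → X, (∏ i, P (s i) (a i) (emp s) (emp a) (s' i)) *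
          l1 (fun y => emp s' y - PMF' P μ π y)
        ≤ √(Fintype.card X) / √N + L_P * l1 (fun u => emp a u - ν u)
          + l1 (fun y => (∑ i, P (s i) (a i) (emp s) ν y) / N - PMF' P (emp s) π y)
          + S * l1 (fun x => emp s x - μ x) := fun a => by
    have hPa := fun i => hP.isPmf (s i) (a i) _ _ hs (emp_isPmf hN a)
    have h := ((isPmf_prod hPa).sum_mul_l1_sub_le (fun s' => emp s') (PMF' P μ π)
      fun y => (∑ i, P (s i) (a i) (emp s) (emp a) y) / N).trans
        (add_le_add (sum_prod_mul_l1_emp_sub_le hN hPa)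
          (l1_avg_transition_sub_PMF'_le hN hL_P hP hπ hμ s a))
    linarith
  have action_noise := sum_prod_mul_l1_emp_sub_nuMF_le hN hπ.isPmf s
  have mixing_noise := sum_prod_mul_l1_avg_transition_sub_PMF'_le hN hP.isPmf hπ.isPmf s
  calc ∑ a : Fin N → U, (∏ i, π (s i) (emp s) (a i)) *
        ∑ s' : Fin N → X, (∏ i, P (s i) (a i) (emp s) (emp a) (s' i)) *
          l1 (fun y => emp s' y - PMF' P μ π y)
      ≤ ∑ a : Fin N → U, (∏ i, π (s i) (emp s) (a i)) *
          (L_P * l1 (fun u => emp a u - ν u)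
            + l1 (fun y => (∑ i, P (s i) (a i) (emp s) ν y) / N - PMF' P (emp s) π y)
            + (√(Fintype.card X) / √N + S * l1 (fun x => emp s x - μ x))) :=
        Finset.sum_le_sum fun a _ => mul_le_mul_of_nonneg_left
          ((state_noise a).trans_eq (by ring)) (hw.1 a)
    _ = L_P * ∑ a : Fin N → U, (∏ i, π (s i) (emp s) (a i)) * l1 (fun u => emp a u - ν u)
          + ∑ a : Fin N → U, (∏ i, π (s i) (emp s) (a i)) *
              l1 (fun y => (∑ i, P (s i) (a i) (emp s) ν y) / N - PMF' P (emp s) π y)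
          + (√(Fintype.card X) / √N + S * l1 (fun x => emp s x - μ x)) := by
        simp only [mul_add, Finset.sum_add_distrib, ← Finset.sum_mul, hw.2, one_mul]
        rw [Finset.mul_sum]
        simp only [mul_left_comm]
    _ ≤ L_P * (√(Fintype.card U) / √N) + √(Fintype.card X) / √N
          + (√(Fintype.card X) / √N + S * l1 (fun x => emp s x - μ x)) := by
        gcongr
    _ = _ := by ring

theorem Wproc_isPmf (hN : 0 < N) (hP : ∀ x u μ ν, IsPmf μ → IsPmf ν → IsPmf (P x u μ ν))
    {π : ℕ → X → (X → ℝ) → U → ℝ} (hπ : ∀ t x μ, IsPmf μ → IsPmf (π t x μ))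
    (x₀ : Fin N → X) (t : ℕ) : IsPmf (Wproc P π x₀ t) := by
  induction t with
  | zero => exact ⟨fun s => by simp only [Wproc]; positivity, by simp [Wproc]⟩
  | succ t ih =>
    have h := isPmf_sum_mul (fun s => isPmf_sum_mul
      (fun a => isPmf_prod fun i => hP (s i) (a i) _ _ (emp_isPmf hN s) (emp_isPmf hN a))
      (isPmf_prod fun i => hπ t (s i) _ (emp_isPmf hN s))) ih
    simpa only [Wproc, mul_comm] using h

theorem sum_Wproc_succ_mul_l1_le (hN : 0 < N) (hL_P : 0 ≤ L_P) (hP : LipschitzTransition L_P P)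
    {π : ℕ → X → (X → ℝ) → U → ℝ} (hπ : ∀ t, LipschitzPolicy L_Q (π t)) (x₀ : Fin N → X)
    {μ₀ : X → ℝ} (hμ₀ : IsPmf μ₀) (t : ℕ) :
    ∑ s, Wproc P π x₀ (t + 1) s * l1 (fun x => emp s x - muFlow P π μ₀ (t + 1) x)
      ≤ (2 * √(Fintype.card X) + L_P * √(Fintype.card U)) / √N
        + ((1 + 2 * L_P) + L_Q * (1 + L_P))
          * ∑ s, Wproc P π x₀ t s * l1 (fun x => emp s x - muFlow P π μ₀ t x) := by
  have hW := Wproc_isPmf hN hP.isPmf (fun t => (hπ t).isPmf) x₀ t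
  have hμ := muFlow_isPmf hP.isPmf (fun t => (hπ t).isPmf) hμ₀ t
  calc ∑ s', Wproc P π x₀ (t + 1) s' * l1 (fun x => emp s' x - muFlow P π μ₀ (t + 1) x)
      = ∑ s, Wproc P π x₀ t s * ∑ a : Fin N → U, (∏ i, π t (s i) (emp s) (a i)) *
          ∑ s' : Fin N → X, (∏ i, P (s i) (a i) (emp s) (emp a) (s' i)) *
            l1 (fun y => emp s' y - PMF' P (muFlow P π μ₀ t) (π t) y) := by
        simp only [Wproc, sum_sum_mul_mul_eq]
        rfl
    _ ≤ ∑ s, Wproc P π x₀ t s * ((2 * √(Fintype.card X) + L_P * √(Fintype.card U)) / √N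
          + ((1 + 2 * L_P) + L_Q * (1 + L_P)) * l1 (fun x => emp s x - muFlow P π μ₀ t x)) :=
        Finset.sum_le_sum fun s _ => mul_le_mul_of_nonneg_left
          (sum_prod_mul_sum_prod_mul_l1_emp_sub_PMF'_le hN hL_P hP (hπ t) hμ s) (hW.1 s)
    _ = _ := by
        simp only [mul_add, Finset.sum_add_distrib, ← Finset.sum_mul, hW.2, one_mul]
        rw [Finset.mul_sum]
        simp only [mul_left_comm]

end NAgent

theorem le_mul_geom_sum_of_le_add_mul {e : ℕ → ℝ} {B S : ℝ} (hS : 0 ≤ S) (h₀ : e 0 ≤ 0)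
    (hstep : ∀ t, e (t + 1) ≤ B + S * e t) (t : ℕ) : e t ≤ B * ∑ i ∈ Finset.range t, S ^ i := by
  induction t with
  | zero => simpa using h₀
  | succ t ih =>
    calc e (t + 1) ≤ B + S * (B * ∑ i ∈ Finset.range t, S ^ i) :=
          (hstep t).trans (by gcongr)
      _ = B * ∑ i ∈ Finset.range (t + 1), S ^ i := by rw [geom_sum_succ]; ring

/-- Lemma (propagation of chaos): the expected L1 distance between the empirical state
distribution of the `N`-agent process and the mean-field flow at time `t` is at most
`(C_P/√N)(√|X| + √|U|)(S_P^t − 1)/(S_P − 1)`,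
where `C_P = 2 + L_P` and `S_P = (1 + 2L_P) + L_Q(1 + L_P)`. -/
theorem empirical_vs_meanfield_flow_bound
    {X U : Type*} [Fintype X] [Fintype U] [DecidableEq X] [DecidableEq U]
    (N : ℕ) (hN : 0 < N)
    (L_P L_Q : ℝ) (hLP : 0 < L_P) (hLQ : 0 < L_Q)
    (P : X → U → (X → ℝ) → (U → ℝ) → X → ℝ)
    (hP : ∀ x u μ ν, IsPmf μ → IsPmf ν → IsPmf (P x u μ ν))
    (hPLip : ∀ x u μ₁ μ₂ ν₁ ν₂, IsPmf μ₁ → IsPmf μ₂ → IsPmf ν₁ → IsPmf ν₂ →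
      l1 (fun y => P x u μ₁ ν₁ y - P x u μ₂ ν₂ y)
        ≤ L_P * (l1 (fun x' => μ₁ x' - μ₂ x') + l1 (fun u' => ν₁ u' - ν₂ u')))
    (π : ℕ → X → (X → ℝ) → U → ℝ)
    (hπ : ∀ t x μ, IsPmf μ → IsPmf (π t x μ))
    (hπLip : ∀ t x μ₁ μ₂, IsPmf μ₁ → IsPmf μ₂ →
      l1 (fun u => π t x μ₁ u - π t x μ₂ u) ≤ L_Q * l1 (fun x' => μ₁ x' - μ₂ x'))
    (x₀ : Fin N → X) (μ₀ : X → ℝ) (hμ₀ : μ₀ = emp x₀) (t : ℕ) :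
    ∑ s : Fin N → X, Wproc P π x₀ t s * l1 (fun x => emp s x - muFlow P π μ₀ t x)
      ≤ ((2 + L_P) / Real.sqrt N) *
          (Real.sqrt (Fintype.card X) + Real.sqrt (Fintype.card U)) *
          ((((1 + 2 * L_P) + L_Q * (1 + L_P)) ^ t - 1) /
            (((1 + 2 * L_P) + L_Q * (1 + L_P)) - 1)) := by
  set S := (1 + 2 * L_P) + L_Q * (1 + L_P)
  have hS : 1 < S := by nlinarith
  let E : ℕ → ℝ := fun k =>
    ∑ s : Fin N → X, Wproc P π x₀ k s * l1 (fun x => emp s x - muFlow P π μ₀ k x)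
  have hstart : E 0 ≤ 0 := by simp [E, Wproc, muFlow, hμ₀, l1]
  have hstep : ∀ k, E (k + 1)
      ≤ (2 * √(Fintype.card X) + L_P * √(Fintype.card U)) / √N + S * E k :=
    sum_Wproc_succ_mul_l1_le hN hLP.le ⟨hP, hPLip⟩ (fun t => ⟨hπ t, hπLip t⟩) x₀
      (hμ₀ ▸ emp_isPmf hN x₀)
  have hB : (2 * √(Fintype.card X) + L_P * √(Fintype.card U)) / √N
      ≤ (2 + L_P) / √N * (√(Fintype.card X) + √(Fintype.card U)) := by
    rw [div_mul_eq_mul_div]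
    gcongr
    nlinarith [Real.sqrt_nonneg (Fintype.card X), Real.sqrt_nonneg (Fintype.card U)]
  calc E t ≤ (2 * √(Fintype.card X) + L_P * √(Fintype.card U)) / √N
          * ∑ i ∈ Finset.range t, S ^ i :=
        le_mul_geom_sum_of_le_add_mul (zero_lt_one.trans hS).le hstart hstep t
    _ ≤ (2 + L_P) / √N * (√(Fintype.card X) + √(Fintype.card U))
          * ∑ i ∈ Finset.range t, S ^ i := by gcongr
    _ = _ := by rw [geom_sum_eq hS.ne']
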